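/- Let X = ℓ_p for some 1 ≤ p < ∞, or X = c₀. If a subset 𝒜 of 𝔅₁(X) has the Baire property with respect to the strong operator topology and is invariant under conjugation by surjective linear isometries (i.e. J 𝒜 J⁻¹ = 𝒜 for every surjective linear isometry J of X), then 𝒜 is either meager or comeager in (𝔅₁(X), SOT). -/

import Mathlib

open Topology Filter
open scoped ZeroAtInfty ENNReal symmDiff

noncomputable section

variable (X : Type*) [NormedAddCommGroup X] [NormedSpace ℂ X]

/-- The closed unit ball of the space of bounded linear operators on `X`. -/
abbrev Ball1 : Type _ := {T : X →L[ℂ] X // ‖T‖ ≤ 1}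

/-- The strong operator topology on the unit ball: the topology of pointwise
norm-convergence of operators. -/
def sot : TopologicalSpace (Ball1 X) :=
  TopologicalSpace.induced (fun T => (T.1 : X → X)) inferInstance

/-- Conjugation `T ↦ J T J⁻¹` of an operator by a surjective linear isometry `J`. -/
def conjOp (J : X ≃ₗᵢ[ℂ] X) (T : X →L[ℂ] X) : X →L[ℂ] X :=
  ((J.toContinuousLinearEquiv : X →L[ℂ] X).comp T).comp
    (J.symm.toContinuousLinearEquiv : X →L[ℂ] X)

/-- A set has the Baire property (with respect to a topology `t`) if it differs from
an open set by a meager set. -/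
def HasBaireProperty {α : Type*} (t : TopologicalSpace α) (s : Set α) : Prop :=
  ∃ u : Set α, @IsOpen α t u ∧ @IsMeagre α t (s ∆ u)

/-- On `X`, every subset of `𝔅₁(X)` which has the Baire property with respect to SOT and
is invariant under conjugation by surjective linear isometries of `X` is either meager
or comeager in `(𝔅₁(X), SOT)`. -/
def ZeroOneLawHolds : Prop :=
  ∀ A : Set (Ball1 X),
    HasBaireProperty (sot X) A →
    (∀ (J : X ≃ₗᵢ[ℂ] X) (T T' : Ball1 X), T'.1 = conjOp X J T.1 → (T ∈ A ↔ T' ∈ A)) →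
    @IsMeagre _ (sot X) A ∨ A ∈ @residual _ (sot X)

end

noncomputable section ZeroOneLawProof

open Topology Filter Set
open scoped symmDiff ENNReal


lemma isMeagre_union' {Y : Type*} [TopologicalSpace Y] {s t : Set Y}
    (hs : IsMeagre s) (ht : IsMeagre t) : IsMeagre (s ∪ t) := by
  rw [IsMeagre, compl_union]
  exact Filter.inter_mem hs ht

lemma zero_one_abstract {Y : Type*} [TopologicalSpace Y] (g : ℕ → Y → Y)
    (hcont : ∀ n, Continuous (g n)) (hgg : ∀ n x, g n (g n x) = x)
    (A : Set Y) (hBP : ∃ u : Set Y, IsOpen u ∧ IsMeagre (A ∆ u))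
    (hA : ∀ n, g n ⁻¹' A = A)
    (htrans : ∀ U V : Set Y, IsOpen U → IsOpen V → U.Nonempty → V.Nonempty →
      ∃ n, ((g n ⁻¹' U) ∩ V).Nonempty) :
    IsMeagre A ∨ A ∈ residual Y := by
  obtain ⟨U, hUo, hM⟩ := hBP
  rcases eq_empty_or_nonempty U with rfl | hUne
  · left
    have : A ∆ (∅ : Set Y) = A := by simp [symmDiff_def]
    rwa [this] at hM
  · right
    have hopenmap : ∀ n, IsOpenMap (g n) := by
      intro n s hs
      have : g n '' s = g n ⁻¹' s := by
        ext y
        constructor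
        · rintro ⟨x, hx, rfl⟩
          simpa [Set.mem_preimage, hgg n x] using hx
        · intro hy; exact ⟨g n y, hy, hgg n y⟩
      rw [this]
      exact hs.preimage (hcont n)
    set W : Set Y := ⋃ n, g n ⁻¹' U with hW
    have hWo : IsOpen W := isOpen_iUnion fun n => hUo.preimage (hcont n)
    have hWd : Dense W := by
      rw [dense_iff_inter_open]
      intro V hVo hVne
      obtain ⟨n, hn⟩ := htrans U V hUo hVo hUne hVne
      exact hn.mono (by intro x hx; exact ⟨hx.2, mem_iUnion.2 ⟨n, hx.1⟩⟩)
    have hUA : IsMeagre (U \ A) := hM.mono (fun x hx => Or.inr ⟨hx.1, hx.2⟩)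
    have hn : ∀ n, IsMeagre ((g n ⁻¹' U) \ A) := by
      intro n
      have : (g n ⁻¹' U) \ A = g n ⁻¹' (U \ A) := by
        rw [preimage_diff, hA]
      rw [this]
      exact hUA.preimage_of_isOpenMap (hcont n) (hopenmap n)
    have hWc : IsMeagre Wᶜ := by
      rw [IsMeagre, compl_compl]
      exact residual_of_dense_open hWo hWd
    have hsub : Aᶜ ⊆ Wᶜ ∪ ⋃ n, ((g n ⁻¹' U) \ A) := by
      intro x hx
      by_cases hxW : x ∈ W
      · obtain ⟨n, hxn⟩ := mem_iUnion.1 hxW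
        exact Or.inr (mem_iUnion.2 ⟨n, hxn, hx⟩)
      · exact Or.inl hxW
    have : IsMeagre (Aᶜ) := (isMeagre_union' hWc (isMeagre_iUnion hn)).mono hsub
    rwa [IsMeagre, compl_compl] at this

variable {X : Type*} [NormedAddCommGroup X] [NormedSpace ℂ X]

lemma conjOp_apply (J : X ≃ₗᵢ[ℂ] X) (T : X →L[ℂ] X) (x : X) :
    conjOp X J T x = J (T (J.symm x)) := rfl

omit [NormedSpace ℂ X] in
lemma norm_sub_tendsto' {f : ℕ → X} {x : X} (h : Tendsto f atTop (𝓝 x)) :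
    Tendsto (fun n => ‖f n - x‖) atTop (𝓝 0) :=
  tendsto_iff_norm_sub_tendsto_zero.1 h

lemma contr_le {T : X →L[ℂ] X} (hT : ‖T‖ ≤ 1) (x : X) : ‖T x‖ ≤ ‖x‖ := by
  calc ‖T x‖ ≤ ‖T‖ * ‖x‖ := T.le_opNorm x
  _ ≤ 1 * ‖x‖ := by gcongr
  _ = ‖x‖ := one_mul _

structure GoodStruct (X : Type*) [NormedAddCommGroup X] [NormedSpace ℂ X] where
  P : ℕ → X →L[ℂ] X
  J : ℕ → X ≃ₗᵢ[ℂ] X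
  hPP : ∀ n x, P n (P n x) = P n x
  hPnorm : ∀ n (x : X), ‖P n x‖ ≤ ‖x‖
  hPtend : ∀ x : X, Tendsto (fun n => P n x) atTop (𝓝 x)
  hJJ : ∀ n x, J n (J n x) = x
  hPJP : ∀ n x, P n ((J n) (P n x)) = 0
  hsplit : ∀ n (x u v : X), P n u = u → J n (P n (J n v)) = v →
    ‖u‖ ≤ ‖P n x‖ → ‖v‖ ≤ ‖P n (J n x)‖ → ‖u + v‖ ≤ ‖x‖

namespace GoodStruct

variable (G : GoodStruct X)

lemma hsymm (n : ℕ) (x : X) : (G.J n).symm x = G.J n x := by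
  conv_lhs => rw [← G.hJJ n x]
  exact (G.J n).symm_apply_apply _

lemma hPJ_small (n : ℕ) (x : X) : ‖G.P n (G.J n x)‖ ≤ ‖x - G.P n x‖ := by
  have : G.P n (G.J n x) = G.P n (G.J n (x - G.P n x)) := by
    rw [map_sub, map_sub, G.hPJP n x, sub_zero]
  rw [this]
  calc ‖G.P n (G.J n (x - G.P n x))‖ ≤ ‖G.J n (x - G.P n x)‖ := G.hPnorm _ _
  _ = ‖x - G.P n x‖ := (G.J n).norm_map _

/-- The compressed operator `Pₙ T Pₙ`. -/
def cmp (n : ℕ) (T : X →L[ℂ] X) : X →L[ℂ] X := (G.P n).comp (T.comp (G.P n))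

lemma cmp_apply (n : ℕ) (T : X →L[ℂ] X) (x : X) : G.cmp n T x = G.P n (T (G.P n x)) := rfl

/-- The direct-sum operator used for transitivity. -/
def Eop (n : ℕ) (T S : X →L[ℂ] X) : X →L[ℂ] X :=
  G.cmp n T + conjOp X (G.J n) (G.cmp n S)

lemma Eop_apply (n : ℕ) (T S : X →L[ℂ] X) (x : X) :
    G.Eop n T S x = G.P n (T (G.P n x)) + G.J n (G.P n (S (G.P n (G.J n x)))) := by
  rw [Eop, ContinuousLinearMap.add_apply, conjOp_apply, G.hsymm]
  rfl

lemma Eop_norm_le (n : ℕ) {T S : X →L[ℂ] X} (hT : ‖T‖ ≤ 1) (hS : ‖S‖ ≤ 1) :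
    ‖G.Eop n T S‖ ≤ 1 := by
  refine ContinuousLinearMap.opNorm_le_bound _ zero_le_one (fun x => ?_)
  rw [Eop_apply, one_mul]
  refine G.hsplit n x _ _ (G.hPP n _) ?_ ?_ ?_
  · rw [G.hJJ n, G.hPP n]
  · calc ‖G.P n (T (G.P n x))‖ ≤ ‖T (G.P n x)‖ := G.hPnorm _ _
    _ ≤ ‖G.P n x‖ := contr_le hT _
  · rw [(G.J n).norm_map]
    calc ‖G.P n (S (G.P n (G.J n x)))‖ ≤ ‖S (G.P n (G.J n x))‖ := G.hPnorm _ _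
    _ ≤ ‖G.P n (G.J n x)‖ := contr_le hS _

/-- Conjugation as a self-map of the ball. -/
def cb (n : ℕ) (T : Ball1 X) : Ball1 X :=
  ⟨conjOp X (G.J n) T.1, by
    refine ContinuousLinearMap.opNorm_le_bound _ zero_le_one (fun x => ?_)
    rw [conjOp_apply, one_mul, (G.J n).norm_map]
    calc ‖T.1 ((G.J n).symm x)‖ ≤ ‖(G.J n).symm x‖ := contr_le T.2 _
    _ = ‖x‖ := by rw [G.hsymm, (G.J n).norm_map]⟩

lemma cb_cb (n : ℕ) (T : Ball1 X) : G.cb n (G.cb n T) = T := by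
  apply Subtype.ext
  apply ContinuousLinearMap.ext
  intro x
  show conjOp X (G.J n) (conjOp X (G.J n) T.1) x = T.1 x
  rw [conjOp_apply, conjOp_apply, G.hsymm, G.hsymm, G.hJJ n, G.hJJ n]

lemma cb_cont (n : ℕ) : Continuous[sot X, sot X] (G.cb n) := by
  have hF : Continuous (fun f : X → X => (fun x => G.J n (f ((G.J n).symm x)))) :=
    continuous_pi fun x => (G.J n).continuous.comp (continuous_apply ((G.J n).symm x))
  have hcoe : Continuous[sot X, _] (fun T : Ball1 X => (T.1 : X → X)) := continuous_induced_dom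
  have hcomp := @Continuous.comp (Ball1 X) (X → X) (X → X) (sot X) _ _ _ _ hF hcoe
  exact continuous_induced_rng.2 hcomp

lemma tendsto_sot {f : ℕ → Ball1 X} {T : Ball1 X}
    (h : ∀ x, Tendsto (fun n => (f n).1 x) atTop (𝓝 (T.1 x))) :
    Tendsto f atTop (@nhds _ (sot X) T) := by
  have hn : @nhds _ (sot X) T
      = Filter.comap (fun S : Ball1 X => (S.1 : X → X)) (𝓝 ((T.1 : X → X))) :=
    nhds_induced _ T
  rw [hn, tendsto_comap_iff]
  exact tendsto_pi_nhds.2 h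

lemma tend_E (T S : Ball1 X) (x : X) :
    Tendsto (fun n => G.Eop n T.1 S.1 x) atTop (𝓝 (T.1 x)) := by
  rw [tendsto_iff_norm_sub_tendsto_zero]
  have key : ∀ n, ‖G.Eop n T.1 S.1 x - T.1 x‖
      ≤ (‖G.P n x - x‖ + ‖G.P n (T.1 x) - T.1 x‖) + ‖x - G.P n x‖ := by
    intro n
    rw [Eop_apply]
    have h1 : ‖G.P n (T.1 (G.P n x)) - T.1 x‖ ≤ ‖G.P n x - x‖ + ‖G.P n (T.1 x) - T.1 x‖ := by
      calc ‖G.P n (T.1 (G.P n x)) - T.1 x‖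
          ≤ ‖G.P n (T.1 (G.P n x)) - G.P n (T.1 x)‖ + ‖G.P n (T.1 x) - T.1 x‖ :=
            norm_sub_le_norm_sub_add_norm_sub _ _ _
      _ ≤ ‖G.P n x - x‖ + ‖G.P n (T.1 x) - T.1 x‖ := by
            gcongr
            calc ‖G.P n (T.1 (G.P n x)) - G.P n (T.1 x)‖
                = ‖G.P n (T.1 (G.P n x) - T.1 x)‖ := by rw [map_sub]
            _ ≤ ‖T.1 (G.P n x) - T.1 x‖ := G.hPnorm _ _
            _ = ‖T.1 (G.P n x - x)‖ := by rw [map_sub]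
            _ ≤ ‖G.P n x - x‖ := contr_le T.2 _
    have h2 : ‖G.J n (G.P n (S.1 (G.P n (G.J n x))))‖ ≤ ‖x - G.P n x‖ := by
      rw [(G.J n).norm_map]
      calc ‖G.P n (S.1 (G.P n (G.J n x)))‖ ≤ ‖S.1 (G.P n (G.J n x))‖ := G.hPnorm _ _
      _ ≤ ‖G.P n (G.J n x)‖ := contr_le S.2 _
      _ ≤ ‖x - G.P n x‖ := G.hPJ_small n x
    calc ‖G.P n (T.1 (G.P n x)) + G.J n (G.P n (S.1 (G.P n (G.J n x)))) - T.1 x‖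
        = ‖(G.P n (T.1 (G.P n x)) - T.1 x) + G.J n (G.P n (S.1 (G.P n (G.J n x))))‖ := by
          rw [add_sub_right_comm]
    _ ≤ ‖G.P n (T.1 (G.P n x)) - T.1 x‖ + ‖G.J n (G.P n (S.1 (G.P n (G.J n x))))‖ :=
          norm_add_le _ _
    _ ≤ _ := by gcongr
  have l1 := norm_sub_tendsto' (G.hPtend x)
  have l2 := norm_sub_tendsto' (G.hPtend (T.1 x))
  have l3 : Tendsto (fun n => ‖x - G.P n x‖) atTop (𝓝 0) := by
    simpa [norm_sub_rev] using l1
  have lsum : Tendsto (fun n => (‖G.P n x - x‖ + ‖G.P n (T.1 x) - T.1 x‖) + ‖x - G.P n x‖)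
      atTop (𝓝 0) := by
    simpa using (l1.add l2).add l3
  exact squeeze_zero (fun n => norm_nonneg _) key lsum

lemma tend_cbE (T S : Ball1 X) (x : X) :
    Tendsto (fun n => conjOp X (G.J n) (G.Eop n T.1 S.1) x) atTop (𝓝 (S.1 x)) := by
  have hval : ∀ n, conjOp X (G.J n) (G.Eop n T.1 S.1) x
      = G.J n (G.P n (T.1 (G.P n (G.J n x)))) + G.P n (S.1 (G.P n x)) := by
    intro n
    rw [conjOp_apply, G.hsymm, Eop_apply, map_add, G.hJJ n, G.hJJ n]
  rw [tendsto_iff_norm_sub_tendsto_zero]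
  have key : ∀ n, ‖conjOp X (G.J n) (G.Eop n T.1 S.1) x - S.1 x‖
      ≤ ‖x - G.P n x‖ + (‖G.P n x - x‖ + ‖G.P n (S.1 x) - S.1 x‖) := by
    intro n
    rw [hval n]
    have h1 : ‖G.J n (G.P n (T.1 (G.P n (G.J n x))))‖ ≤ ‖x - G.P n x‖ := by
      rw [(G.J n).norm_map]
      calc ‖G.P n (T.1 (G.P n (G.J n x)))‖ ≤ ‖T.1 (G.P n (G.J n x))‖ := G.hPnorm _ _
      _ ≤ ‖G.P n (G.J n x)‖ := contr_le T.2 _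
      _ ≤ ‖x - G.P n x‖ := G.hPJ_small n x
    have h2 : ‖G.P n (S.1 (G.P n x)) - S.1 x‖ ≤ ‖G.P n x - x‖ + ‖G.P n (S.1 x) - S.1 x‖ := by
      calc ‖G.P n (S.1 (G.P n x)) - S.1 x‖
          ≤ ‖G.P n (S.1 (G.P n x)) - G.P n (S.1 x)‖ + ‖G.P n (S.1 x) - S.1 x‖ :=
            norm_sub_le_norm_sub_add_norm_sub _ _ _
      _ ≤ ‖G.P n x - x‖ + ‖G.P n (S.1 x) - S.1 x‖ := by
            gcongr
            calc ‖G.P n (S.1 (G.P n x)) - G.P n (S.1 x)‖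
                = ‖G.P n (S.1 (G.P n x) - S.1 x)‖ := by rw [map_sub]
            _ ≤ ‖S.1 (G.P n x) - S.1 x‖ := G.hPnorm _ _
            _ = ‖S.1 (G.P n x - x)‖ := by rw [map_sub]
            _ ≤ ‖G.P n x - x‖ := contr_le S.2 _
    calc ‖G.J n (G.P n (T.1 (G.P n (G.J n x)))) + G.P n (S.1 (G.P n x)) - S.1 x‖
        ≤ ‖G.J n (G.P n (T.1 (G.P n (G.J n x))))‖ + ‖G.P n (S.1 (G.P n x)) - S.1 x‖ := by
          rw [add_sub_assoc]; exact norm_add_le _ _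
    _ ≤ _ := by gcongr
  have l1 := norm_sub_tendsto' (G.hPtend x)
  have l2 := norm_sub_tendsto' (G.hPtend (S.1 x))
  have l3 : Tendsto (fun n => ‖x - G.P n x‖) atTop (𝓝 0) := by
    simpa [norm_sub_rev] using l1
  have lsum : Tendsto (fun n => ‖x - G.P n x‖ + (‖G.P n x - x‖ + ‖G.P n (S.1 x) - S.1 x‖))
      atTop (𝓝 0) := by
    simpa using l3.add (l1.add l2)
  exact squeeze_zero (fun n => norm_nonneg _) key lsum

end GoodStruct

theorem GoodStruct.zol (G : GoodStruct X) : ZeroOneLawHolds X := by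
  intro A hBP hinv
  refine @zero_one_abstract (Ball1 X) (sot X) (fun n => G.cb n) G.cb_cont
    (fun n T => G.cb_cb n T) A hBP ?_ ?_
  · intro n
    ext T
    exact (hinv (G.J n) T (G.cb n T) rfl).symm
  · intro U V hUo hVo hUne hVne
    obtain ⟨T, hTU⟩ := hUne
    obtain ⟨S, hSV⟩ := hVne
    set e : ℕ → Ball1 X := fun n => ⟨G.Eop n T.1 S.1, G.Eop_norm_le n T.2 S.2⟩ with he
    have h1 : Tendsto e atTop (@nhds _ (sot X) T) :=
      tendsto_sot (fun x => G.tend_E T S x)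
    have h2 : Tendsto (fun n => G.cb n (e n)) atTop (@nhds _ (sot X) S) :=
      tendsto_sot (fun x => G.tend_cbE T S x)
    have e1 : ∀ᶠ n in atTop, e n ∈ U := h1 (@IsOpen.mem_nhds (Ball1 X) (sot X) T U hUo hTU)
    have e2 : ∀ᶠ n in atTop, G.cb n (e n) ∈ V := h2 (@IsOpen.mem_nhds (Ball1 X) (sot X) S V hVo hSV)
    obtain ⟨n, hnU, hnV⟩ := (e1.and e2).exists
    refine ⟨n, G.cb n (e n), ?_, hnV⟩
    show G.cb n (G.cb n (e n)) ∈ U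
    rwa [G.cb_cb]


/-- The block-swap involution of `ℕ`: exchanges `[0,n]` and `[n+1,2n+1]`. -/
def sw (n i : ℕ) : ℕ := if i ≤ n then i + (n + 1) else if i ≤ 2 * n + 1 then i - (n + 1) else i

lemma sw_invol (n : ℕ) : Function.Involutive (sw n) := by
  intro i
  simp only [sw]
  split_ifs <;> omega

lemma sw_gt (n i : ℕ) (h : i ≤ n) : ¬ (sw n i ≤ n) := by
  simp only [sw, if_pos h]; omega

namespace C0Inst

lemma c0_apply_le (f : C₀(ℕ, ℂ)) (i : ℕ) : ‖f i‖ ≤ ‖f‖ := by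
  rw [← ZeroAtInftyContinuousMap.norm_toBCF_eq_norm]
  exact BoundedContinuousFunction.norm_coe_le_norm f.toBCF i

lemma c0_norm_le {f : C₀(ℕ, ℂ)} {C : ℝ} (hC : 0 ≤ C) (h : ∀ i, ‖f i‖ ≤ C) : ‖f‖ ≤ C := by
  rw [← ZeroAtInftyContinuousMap.norm_toBCF_eq_norm]
  exact BoundedContinuousFunction.norm_le hC |>.2 h

/-- Coordinate truncation. -/
def trunc (n : ℕ) (f : C₀(ℕ, ℂ)) : C₀(ℕ, ℂ) where
  toFun := fun i => if i ≤ n then f i else 0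
  continuous_toFun := continuous_of_discreteTopology
  zero_at_infty' := by
    rw [cocompact_eq_cofinite]
    refine tendsto_const_nhds.congr' ?_
    have hmem : {i : ℕ | n < i} ∈ (Filter.cofinite : Filter ℕ) := by
      rw [Filter.mem_cofinite]
      have hc : {i : ℕ | n < i}ᶜ = Set.Iic n := by ext i; simp
      rw [hc]; exact Set.finite_Iic n
    exact Filter.eventuallyEq_of_mem hmem (fun i hi => by
      simp only [Set.mem_setOf_eq] at hi
      simp [Nat.not_le.2 hi])

@[simp] lemma trunc_apply (n : ℕ) (f : C₀(ℕ, ℂ)) (i : ℕ) :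
    trunc n f i = if i ≤ n then f i else 0 := rfl

/-- Composition with the block swap. -/
def perm (n : ℕ) (f : C₀(ℕ, ℂ)) : C₀(ℕ, ℂ) where
  toFun := fun i => f (sw n i)
  continuous_toFun := continuous_of_discreteTopology
  zero_at_infty' := by
    have hinj : Function.Injective (sw n) := (sw_invol n).injective
    have : Tendsto (sw n) (cocompact ℕ) (cocompact ℕ) := by
      rw [cocompact_eq_cofinite]
      exact hinj.tendsto_cofinite
    exact (ZeroAtInftyContinuousMap.zero_at_infty' f).comp this

@[simp] lemma perm_apply (n : ℕ) (f : C₀(ℕ, ℂ)) (i : ℕ) : perm n f i = f (sw n i) := rfl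

lemma ext0 {f g : C₀(ℕ, ℂ)} (h : ∀ i, f i = g i) : f = g := DFunLike.ext f g h

lemma perm_norm (n : ℕ) (f : C₀(ℕ, ℂ)) : ‖perm n f‖ = ‖f‖ := by
  have key : ∀ g : C₀(ℕ, ℂ), ‖perm n g‖ ≤ ‖g‖ := fun g =>
    c0_norm_le (norm_nonneg g) (fun i => by rw [perm_apply]; exact c0_apply_le g _)
  refine le_antisymm (key f) ?_
  have : perm n (perm n f) = f := ext0 (fun i => by simp [sw_invol n i])
  calc ‖f‖ = ‖perm n (perm n f)‖ := by rw [this]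
  _ ≤ ‖perm n f‖ := key _

/-- Truncation as a continuous linear map. -/
def truncL (n : ℕ) : C₀(ℕ, ℂ) →L[ℂ] C₀(ℕ, ℂ) :=
  LinearMap.mkContinuous
    { toFun := trunc n
      map_add' := fun f g => ext0 fun i => by
        simp only [trunc_apply, ZeroAtInftyContinuousMap.coe_add, Pi.add_apply]
        split_ifs <;> simp
      map_smul' := fun c f => ext0 fun i => by
        simp only [trunc_apply, ZeroAtInftyContinuousMap.coe_smul, Pi.smul_apply,
          RingHom.id_apply]
        split_ifs <;> simp }
    1
    (fun f => by
      rw [one_mul]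
      exact c0_norm_le (norm_nonneg f) fun i => by
        simp only [LinearMap.coe_mk, AddHom.coe_mk, trunc_apply]
        split_ifs
        · exact c0_apply_le f i
        · simp [norm_nonneg])

@[simp] lemma truncL_apply (n : ℕ) (f : C₀(ℕ, ℂ)) (i : ℕ) :
    truncL n f i = if i ≤ n then f i else 0 := rfl

/-- The block swap as a linear isometric equivalence. -/
def permE (n : ℕ) : C₀(ℕ, ℂ) ≃ₗᵢ[ℂ] C₀(ℕ, ℂ) where
  toLinearEquiv :=
    { toFun := perm n
      map_add' := fun f g => ext0 fun i => by
        simp [ZeroAtInftyContinuousMap.coe_add, Pi.add_apply]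
      map_smul' := fun c f => ext0 fun i => by
        simp [ZeroAtInftyContinuousMap.coe_smul, Pi.smul_apply]
      invFun := perm n
      left_inv := fun f => ext0 fun i => by simp [sw_invol n i]
      right_inv := fun f => ext0 fun i => by simp [sw_invol n i] }
  norm_map' := perm_norm n

@[simp] lemma permE_apply (n : ℕ) (f : C₀(ℕ, ℂ)) (i : ℕ) : permE n f i = f (sw n i) := rfl

/-- `GoodStruct` structure on `c₀`. -/
def c0Good : GoodStruct C₀(ℕ, ℂ) where
  P := truncL
  J := permE
  hPP := fun n f => ext0 fun i => by
    simp only [truncL_apply]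
    split_ifs <;> simp_all
  hPnorm := fun n f => c0_norm_le (norm_nonneg f) fun i => by
    simp only [truncL_apply]
    split_ifs
    · exact c0_apply_le f i
    · simp [norm_nonneg]
  hPtend := by
    intro f
    rw [Metric.tendsto_atTop]
    intro ε hε
    have h0 := ZeroAtInftyContinuousMap.zero_at_infty' f
    rw [cocompact_eq_cofinite, Nat.cofinite_eq_atTop] at h0
    obtain ⟨N, hN⟩ := (Metric.tendsto_atTop.1 h0) (ε / 2) (half_pos hε)
    refine ⟨N, fun n hn => ?_⟩
    rw [dist_eq_norm]
    have hb : ‖truncL n f - f‖ ≤ ε / 2 := by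
      refine c0_norm_le (le_of_lt (half_pos hε)) fun i => ?_
      have : (truncL n f - f) i = (if i ≤ n then f i else 0) - f i := by
        simp [ZeroAtInftyContinuousMap.coe_sub, Pi.sub_apply]
      rw [this]
      split_ifs with h
      · simp [le_of_lt (half_pos hε)]
      · rw [zero_sub, norm_neg]
        have : dist (f i) 0 < ε / 2 := hN i (le_trans hn (by omega))
        rw [dist_zero_right] at this
        exact le_of_lt this
    linarith
  hJJ := fun n f => ext0 fun i => by simp [sw_invol n i]
  hPJP := fun n f => ext0 fun i => by
    simp only [truncL_apply, permE_apply, ZeroAtInftyContinuousMap.coe_zero, Pi.zero_apply]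
    split_ifs with h h2
    · exact absurd h2 (sw_gt n i h)
    · rfl
    · rfl
  hsplit := by
    intro n x u v hu hv hu2 hv2
    refine c0_norm_le (norm_nonneg x) fun i => ?_
    have hJx : ‖permE n x‖ = ‖x‖ := perm_norm n x
    by_cases h : i ≤ n
    · have hv0 : v i = 0 := by
        have := DFunLike.congr_fun hv i
        simp only [permE_apply, truncL_apply] at this
        rw [if_neg (sw_gt n i h), eq_comm] at this
        exact this
      rw [show (u + v) i = u i + v i from rfl, hv0, add_zero]
      calc ‖u i‖ ≤ ‖u‖ := c0_apply_le u i
      _ ≤ ‖truncL n x‖ := hu2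
      _ ≤ ‖x‖ := c0_norm_le (norm_nonneg x) fun j => by
          simp only [truncL_apply]; split_ifs
          · exact c0_apply_le x j
          · simp [norm_nonneg]
    · have hu0 : u i = 0 := by
        have := DFunLike.congr_fun hu i
        simp only [truncL_apply] at this
        rw [if_neg h, eq_comm] at this
        exact this
      rw [show (u + v) i = u i + v i from rfl, hu0, zero_add]
      calc ‖v i‖ ≤ ‖v‖ := c0_apply_le v i
      _ ≤ ‖truncL n (permE n x)‖ := hv2
      _ ≤ ‖permE n x‖ := by
          refine c0_norm_le (norm_nonneg _) fun j => ?_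
          simp only [truncL_apply]; split_ifs
          · exact c0_apply_le _ j
          · simp [norm_nonneg]
      _ = ‖x‖ := hJx

end C0Inst

lemma rpow_tendsto_zero {q : ℝ} {a : ℕ → ℝ} (ha : ∀ n, 0 ≤ a n) (hq : 0 < q)
    (h : Tendsto (fun n => a n ^ q) atTop (𝓝 0)) : Tendsto a atTop (𝓝 0) := by
  rw [Metric.tendsto_atTop] at h ⊢
  intro ε hε
  obtain ⟨N, hN⟩ := h (ε ^ q) (Real.rpow_pos_of_pos hε q)
  refine ⟨N, fun n hn => ?_⟩
  have h1 := hN n hn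
  rw [dist_zero_right, Real.norm_eq_abs, abs_of_nonneg (Real.rpow_nonneg (ha n) q)] at h1
  rw [dist_zero_right, Real.norm_eq_abs, abs_of_nonneg (ha n)]
  by_contra hcon
  push_neg at hcon
  exact absurd h1 (not_lt.2 (Real.rpow_le_rpow hε.le hcon hq.le))

lemma norm_ite_rpow {q : ℝ} (hq : 0 < q) (c : Prop) [Decidable c] (a : ℂ) :
    ‖(if c then a else 0)‖ ^ q = if c then ‖a‖ ^ q else 0 := by
  split_ifs <;> simp [Real.zero_rpow hq.ne']

namespace LpInst

variable (p : ℝ≥0∞) [Fact (1 ≤ p)]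

abbrev XX := lp (fun _ : ℕ => ℂ) p

variable (hp : p ≠ ∞)
include hp

lemma hq0 : 0 < p.toReal := by
  refine ENNReal.toReal_pos (fun h0 => ?_) hp
  have h1 : (1 : ℝ≥0∞) ≤ p := Fact.out
  rw [h0] at h1
  simp at h1

/-- Truncated sequence. -/
def tf (n : ℕ) (f : ∀ _ : ℕ, ℂ) : ∀ _ : ℕ, ℂ := fun i => if i ≤ n then f i else 0

lemma memℓp_tf (n : ℕ) (f : XX p) : Memℓp (tf n ⇑f) p := by
  apply memℓp_gen
  refine Summable.of_nonneg_of_le (fun i => Real.rpow_nonneg (norm_nonneg _) _)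
    (fun i => Real.rpow_le_rpow (norm_nonneg _) ?_ (hq0 p hp).le)
    ((lp.memℓp f).summable (hq0 p hp))
  by_cases h : i ≤ n <;> simp [tf, h]

lemma memℓp_pf (n : ℕ) (f : XX p) : Memℓp (fun i => f (sw n i)) p := by
  apply memℓp_gen
  have : (fun i => ‖f (sw n i)‖ ^ p.toReal)
      = (fun j => ‖f j‖ ^ p.toReal) ∘ ⇑((sw_invol n).toPerm) := rfl
  rw [this, Equiv.summable_iff]
  exact (lp.memℓp f).summable (hq0 p hp)

def truncLp (n : ℕ) (f : XX p) : XX p := ⟨tf n ⇑f, memℓp_tf p hp n f⟩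

@[simp] lemma truncLp_apply (n : ℕ) (f : XX p) (i : ℕ) :
    truncLp p hp n f i = if i ≤ n then f i else 0 := rfl

def permLp (n : ℕ) (f : XX p) : XX p := ⟨fun i => f (sw n i), memℓp_pf p hp n f⟩

@[simp] lemma permLp_apply (n : ℕ) (f : XX p) (i : ℕ) :
    permLp p hp n f i = f (sw n i) := rfl

lemma tsum_trunc_le (n : ℕ) (f : XX p) :
    ∑' i, ‖truncLp p hp n f i‖ ^ p.toReal ≤ ‖f‖ ^ p.toReal := by
  rw [lp.norm_rpow_eq_tsum (hq0 p hp) f]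
  refine Summable.tsum_le_tsum (fun i => ?_) ((lp.memℓp _).summable (hq0 p hp))
    ((lp.memℓp f).summable (hq0 p hp))
  rw [truncLp_apply, norm_ite_rpow (hq0 p hp)]
  split_ifs
  · exact le_refl _
  · exact Real.rpow_nonneg (norm_nonneg _) _

lemma norm_truncLp_le (n : ℕ) (f : XX p) : ‖truncLp p hp n f‖ ≤ ‖f‖ :=
  lp.norm_le_of_tsum_le (hq0 p hp) (norm_nonneg f) (tsum_trunc_le p hp n f)

lemma tsum_perm (n : ℕ) (f : XX p) :
    ∑' i, ‖permLp p hp n f i‖ ^ p.toReal = ∑' i, ‖f i‖ ^ p.toReal := by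
  have := Equiv.tsum_eq ((sw_invol n).toPerm) (fun j => ‖f j‖ ^ p.toReal)
  exact this

lemma norm_permLp (n : ℕ) (f : XX p) : ‖permLp p hp n f‖ = ‖f‖ := by
  refine le_antisymm ?_ ?_
  · refine lp.norm_le_of_tsum_le (hq0 p hp) (norm_nonneg f) ?_
    rw [tsum_perm, lp.norm_rpow_eq_tsum (hq0 p hp) f]
  · refine lp.norm_le_of_tsum_le (hq0 p hp) (norm_nonneg _) ?_
    rw [lp.norm_rpow_eq_tsum (hq0 p hp) (permLp p hp n f), tsum_perm]

def truncL (n : ℕ) : XX p →L[ℂ] XX p :=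
  LinearMap.mkContinuous
    { toFun := truncLp p hp n
      map_add' := fun f g => by
        apply lp.ext
        funext i
        simp only [truncLp_apply, lp.coeFn_add, Pi.add_apply, truncLp_apply]
        split_ifs <;> simp
      map_smul' := fun c f => by
        apply lp.ext
        funext i
        simp only [truncLp_apply, lp.coeFn_smul, Pi.smul_apply, RingHom.id_apply]
        split_ifs <;> simp }
    1
    (fun f => by rw [one_mul]; exact norm_truncLp_le p hp n f)

@[simp] lemma truncL_apply (n : ℕ) (f : XX p) (i : ℕ) :
    truncL p hp n f i = if i ≤ n then f i else 0 := rfl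

def permE (n : ℕ) : XX p ≃ₗᵢ[ℂ] XX p where
  toLinearEquiv :=
    { toFun := permLp p hp n
      map_add' := fun f g => by
        apply lp.ext
        funext i
        simp [lp.coeFn_add, Pi.add_apply]
      map_smul' := fun c f => by
        apply lp.ext
        funext i
        simp [lp.coeFn_smul, Pi.smul_apply]
      invFun := permLp p hp n
      left_inv := fun f => by
        apply lp.ext
        funext i
        simp [sw_invol n i]
      right_inv := fun f => by
        apply lp.ext
        funext i
        simp [sw_invol n i] }
  norm_map' := norm_permLp p hp n

@[simp] lemma permE_apply (n : ℕ) (f : XX p) (i : ℕ) :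
    permE p hp n f i = f (sw n i) := rfl

lemma trunc_tendsto (f : XX p) : Tendsto (fun n => truncL p hp n f) atTop (𝓝 f) := by
  have hq := hq0 p hp
  set q := p.toReal with hqdef
  set g : ℕ → ℝ := fun i => ‖f i‖ ^ q with hg
  have hgs : Summable g := (lp.memℓp f).summable hq
  have hdiff : ∀ n, ‖truncL p hp n f - f‖ ^ q = ∑' i, g (i + (n + 1)) := by
    intro n
    rw [lp.norm_rpow_eq_tsum hq]
    have hd : ∀ i, ‖(truncL p hp n f - f) i‖ ^ q = if i ≤ n then 0 else g i := by
      intro i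
      rw [lp.coeFn_sub, Pi.sub_apply, truncL_apply]
      split_ifs with h
      · simp [Real.zero_rpow hq.ne']
      · rw [zero_sub, norm_neg]
    have hs : Summable (fun i => if i ≤ n then 0 else g i) := by
      refine Summable.of_nonneg_of_le (fun i => ?_) (fun i => ?_) hgs
      · split_ifs
        · exact le_refl 0
        · exact Real.rpow_nonneg (norm_nonneg _) _
      · split_ifs
        · exact Real.rpow_nonneg (norm_nonneg _) _
        · exact le_refl _
    calc ∑' i, ‖(truncL p hp n f - f) i‖ ^ q = ∑' i, (if i ≤ n then 0 else g i) :=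
          tsum_congr hd
    _ = ∑ i ∈ Finset.range (n + 1), (if i ≤ n then 0 else g i)
        + ∑' i, (if i + (n + 1) ≤ n then 0 else g (i + (n + 1))) :=
          (Summable.sum_add_tsum_nat_add (n + 1) hs).symm
    _ = ∑' i, g (i + (n + 1)) := by
        rw [Finset.sum_eq_zero (fun i hi => if_pos (by
          have := Finset.mem_range.1 hi; omega)), zero_add]
        exact tsum_congr (fun i => if_neg (by omega))
  rw [tendsto_iff_norm_sub_tendsto_zero]
  refine rpow_tendsto_zero (fun n => norm_nonneg _) hq ?_
  have h1 : Tendsto (fun m => ∑' i, g (i + m)) atTop (𝓝 0) := tendsto_sum_nat_add g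
  have h2 : Tendsto (fun n : ℕ => n + 1) atTop atTop := tendsto_add_atTop_nat 1
  have := h1.comp h2
  refine this.congr (fun n => ?_)
  exact (hdiff n).symm

/-- `GoodStruct` structure on `ℓᵖ`. -/
def lpGood : GoodStruct (XX p) where
  P := truncL p hp
  J := permE p hp
  hPP := fun n f => by
    apply lp.ext
    funext i
    simp only [truncL_apply]
    split_ifs <;> rfl
  hPnorm := norm_truncLp_le p hp
  hPtend := trunc_tendsto p hp
  hJJ := fun n f => by
    apply lp.ext
    funext i
    show f (sw n (sw n i)) = f i
    rw [sw_invol n i]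
  hPJP := fun n f => by
    apply lp.ext
    funext i
    show (if i ≤ n then (if sw n i ≤ n then f (sw n i) else 0) else 0) = 0
    split_ifs with h h2
    · exact absurd h2 (sw_gt n i h)
    · rfl
    · rfl
  hsplit := by
    intro n x u v hu hv hu2 hv2
    have hq := hq0 p hp
    set q := p.toReal with hqdef
    have su : Summable fun i => ‖u i‖ ^ q := (lp.memℓp u).summable hq
    have sv : Summable fun i => ‖v i‖ ^ q := (lp.memℓp v).summable hq
    have sx : Summable fun i => ‖x i‖ ^ q := (lp.memℓp x).summable hq
    have hudisj : ∀ i, ¬ i ≤ n → u i = 0 := by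
      intro i h
      have h2 : (truncL p hp n u) i = u i := by rw [hu]
      rw [← h2]
      exact if_neg h
    have hvdisj : ∀ i, i ≤ n → v i = 0 := by
      intro i h
      have h2 : ((permE p hp n) ((truncL p hp n) ((permE p hp n) v))) i = v i := by rw [hv]
      rw [← h2]
      show (if sw n i ≤ n then ((permE p hp n) v) (sw n i) else 0) = 0
      exact if_neg (sw_gt n i h)
    refine lp.norm_le_of_tsum_le hq (norm_nonneg x) ?_
    have sG : Summable (fun j => if j ≤ n then ‖x j‖ ^ q else 0) := by
      refine Summable.of_nonneg_of_le (fun i => ?_) (fun i => ?_) sx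
      · split_ifs
        · exact Real.rpow_nonneg (norm_nonneg _) _
        · exact le_refl 0
      · split_ifs
        · exact le_refl _
        · exact Real.rpow_nonneg (norm_nonneg _) _
    have sF : Summable (fun j => if sw n j ≤ n then ‖x j‖ ^ q else 0) := by
      refine Summable.of_nonneg_of_le (fun i => ?_) (fun i => ?_) sx
      · split_ifs
        · exact Real.rpow_nonneg (norm_nonneg _) _
        · exact le_refl 0
      · split_ifs
        · exact le_refl _
        · exact Real.rpow_nonneg (norm_nonneg _) _
    have step1 : ∀ i, ‖(u + v) i‖ ^ q = ‖u i‖ ^ q + ‖v i‖ ^ q := by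
      intro i
      rw [lp.coeFn_add, Pi.add_apply]
      by_cases h : i ≤ n
      · rw [hvdisj i h, add_zero, norm_zero, Real.zero_rpow hq.ne', add_zero]
      · rw [hudisj i h, zero_add, norm_zero, Real.zero_rpow hq.ne', zero_add]
    have htr1 : ∑' i, ‖truncL p hp n x i‖ ^ q
        = ∑' i, (if i ≤ n then ‖x i‖ ^ q else 0) := by
      refine tsum_congr (fun i => ?_)
      show ‖(if i ≤ n then x i else 0)‖ ^ q = if i ≤ n then ‖x i‖ ^ q else 0
      exact norm_ite_rpow hq _ _
    have htr2 : ∑' i, ‖truncL p hp n (permE p hp n x) i‖ ^ q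
        = ∑' j, (if sw n j ≤ n then ‖x j‖ ^ q else 0) := by
      have lhs : ∑' i, ‖truncL p hp n (permE p hp n x) i‖ ^ q
          = ∑' i, (if sw n (sw n i) ≤ n then ‖x (sw n i)‖ ^ q else 0) := by
        refine tsum_congr (fun i => ?_)
        show ‖(if i ≤ n then x (sw n i) else 0)‖ ^ q
            = if sw n (sw n i) ≤ n then ‖x (sw n i)‖ ^ q else 0
        rw [norm_ite_rpow hq, sw_invol n i]
      rw [lhs]
      exact Equiv.tsum_eq ((sw_invol n).toPerm) (fun j => if sw n j ≤ n then ‖x j‖ ^ q else 0)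
    have pw : ∀ i, (if i ≤ n then ‖x i‖ ^ q else 0)
        + (if sw n i ≤ n then ‖x i‖ ^ q else 0) ≤ ‖x i‖ ^ q := by
      intro i
      by_cases h : i ≤ n
      · rw [if_pos h, if_neg (sw_gt n i h), add_zero]
      · rw [if_neg h, zero_add]
        split_ifs
        · exact le_refl _
        · exact Real.rpow_nonneg (norm_nonneg _) _
    calc ∑' i, ‖(u + v) i‖ ^ q = ∑' i, (‖u i‖ ^ q + ‖v i‖ ^ q) := tsum_congr step1
    _ = (∑' i, ‖u i‖ ^ q) + ∑' i, ‖v i‖ ^ q := Summable.tsum_add su sv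
    _ = ‖u‖ ^ q + ‖v‖ ^ q := by rw [lp.norm_rpow_eq_tsum hq, lp.norm_rpow_eq_tsum hq]
    _ ≤ ‖truncL p hp n x‖ ^ q + ‖truncL p hp n (permE p hp n x)‖ ^ q :=
        add_le_add (Real.rpow_le_rpow (norm_nonneg u) hu2 hq.le)
          (Real.rpow_le_rpow (norm_nonneg v) hv2 hq.le)
    _ = (∑' i, ‖truncL p hp n x i‖ ^ q) + ∑' i, ‖truncL p hp n (permE p hp n x) i‖ ^ q := by
        rw [lp.norm_rpow_eq_tsum hq, lp.norm_rpow_eq_tsum hq]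
    _ = (∑' i, (if i ≤ n then ‖x i‖ ^ q else 0))
        + ∑' i, (if sw n i ≤ n then ‖x i‖ ^ q else 0) := by rw [htr1, htr2]
    _ = ∑' i, ((if i ≤ n then ‖x i‖ ^ q else 0) + (if sw n i ≤ n then ‖x i‖ ^ q else 0)) :=
        (Summable.tsum_add sG sF).symm
    _ ≤ ∑' i, ‖x i‖ ^ q := Summable.tsum_le_tsum pw (sG.add sF) sx
    _ = ‖x‖ ^ q := (lp.norm_rpow_eq_tsum hq x).symm

end LpInst

end ZeroOneLawProof

/-- Let `X = ℓ_p` for some `1 ≤ p < ∞`, or `X = c₀`. If `𝒜 ⊆ 𝔅₁(X)` has the Baire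
property for the strong operator topology and satisfies `J 𝒜 J⁻¹ = 𝒜` for every
surjective linear isometry `J` of `X`, then `𝒜` is either meager or comeager in
`(𝔅₁(X), SOT)`. -/
theorem zero_one_law_for_invariant_sets_lp_c0 :
    (∀ (p : ℝ≥0∞) [Fact (1 ≤ p)], p ≠ ∞ → ZeroOneLawHolds (lp (fun _ : ℕ => ℂ) p)) ∧
    ZeroOneLawHolds C₀(ℕ, ℂ) := by
  constructor
  · intro p _ hpne
    exact (LpInst.lpGood p hpne).zol
  · exact C0Inst.c0Good.zol
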